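/- For every n ≥ 1, the sum of 3^(m(b,n)) over all b with 0 ≤ b < 2^n equals 4^n. -/

import Mathlib

def T (N : ℕ) : ℕ := if N % 2 = 0 then N / 2 else (3 * N + 1) / 2

def m (b n : ℕ) : ℕ := ((Finset.range n).filter (fun k => Odd (T^[k] b))).card

/-!
Write `S n = ∑_{b < 2^n} 3^(m b n)`. Splitting `b < 2^(n+1)` by parity,
`m (2a) (n+1) = m a n` and `m (2a+1) (n+1) = m (3a+2) n + 1`. The parity of `T^[k] b` only
depends on `b` mod `2^(k+1)`, so `m · n` is `2^n`-periodic, and `a ↦ 3a + 2` permutes the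
residues mod `2^n`. Hence `S (n+1) = S n + 3 S n = 4 S n`.
-/

open Finset Function

theorem Finset.sum_range_two_mul {M : Type*} [AddCommMonoid M] (f : ℕ → M) (N : ℕ) :
    ∑ b ∈ range (2 * N), f b = ∑ a ∈ range N, f (2 * a) + ∑ a ∈ range N, f (2 * a + 1) := by
  induction N with
  | zero => simp
  | succ N ih =>
    rw [show 2 * (N + 1) = 2 * N + 1 + 1 by ring, sum_range_succ, sum_range_succ, ih,
      sum_range_succ, sum_range_succ]
    abel

theorem Function.Periodic.sum_range_mul_add {M : Type*} [AddCommMonoid M] {f : ℕ → M} {N : ℕ}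
    (hf : Periodic f N) {c : ℕ} (hc : c.Coprime N) (d : ℕ) :
    ∑ a ∈ range N, f (c * a + d) = ∑ a ∈ range N, f a := by
  rcases N.eq_zero_or_pos with rfl | hN
  · simp
  have hmaps : Set.MapsTo (fun a => (c * a + d) % N) (range N) (range N) :=
    fun _ _ => mem_range.2 (Nat.mod_lt _ hN)
  have hinj : Set.InjOn (fun a => (c * a + d) % N) (range N) := by
    intro a ha b hb hab
    have hab' : a ≡ b [MOD N] :=
      Nat.ModEq.cancel_left_of_coprime hc.symm (Nat.ModEq.add_right_cancel' d hab)
    rwa [Nat.ModEq, Nat.mod_eq_of_lt (mem_range.1 ha), Nat.mod_eq_of_lt (mem_range.1 hb)] at hab'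
  exact sum_nbij _ hmaps hinj (surjOn_of_injOn_of_card_le _ hmaps hinj le_rfl)
    fun a _ => (hf.map_mod_nat _).symm

theorem T_eq (x : ℕ) : T x = if x % 2 = 0 then x / 2 else 3 * (x / 2) + 2 := by
  unfold T; split <;> omega

theorem T_two_mul (a : ℕ) : T (2 * a) = a := by
  unfold T; split <;> omega

theorem T_two_mul_add_one (a : ℕ) : T (2 * a + 1) = 3 * a + 2 := by
  unfold T; split <;> omega

theorem T_modEq {n x y : ℕ} (h : x ≡ y [MOD 2 * n]) : T x ≡ T y [MOD n] := by
  have hparity : x % 2 = y % 2 := h.of_mul_right n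
  have hhalf : x / 2 ≡ y / 2 [MOD n] :=
    Nat.ModEq.mul_left_cancel' two_ne_zero <| Nat.ModEq.add_right_cancel' (x % 2) <| by
      rwa [Nat.div_add_mod, hparity, Nat.div_add_mod]
  rw [T_eq, T_eq, hparity]
  split_ifs
  exacts [hhalf, (hhalf.mul_left 3).add_right 2]

theorem iterate_T_modEq (k : ℕ) {n x y : ℕ} (h : x ≡ y [MOD 2 ^ k * n]) :
    T^[k] x ≡ T^[k] y [MOD n] := by
  induction k generalizing x y with
  | zero => simpa using h
  | succ k ih =>
    rw [iterate_succ_apply, iterate_succ_apply]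
    exact ih (T_modEq (by rwa [pow_succ', mul_assoc] at h))

theorem odd_iterate_T_iff {k x y : ℕ} (h : x ≡ y [MOD 2 ^ (k + 1)]) :
    Odd (T^[k] x) ↔ Odd (T^[k] y) := by
  have h2 : T^[k] x % 2 = T^[k] y % 2 := iterate_T_modEq k (n := 2) (by rwa [← pow_succ])
  rw [Nat.odd_iff, Nat.odd_iff, h2]

theorem m_periodic (n : ℕ) : Periodic (m · n) (2 ^ n) := fun _ =>
  congrArg card <| filter_congr fun _ hk =>
    odd_iterate_T_iff <| (Nat.add_modEq_right).of_dvd (pow_dvd_pow 2 (mem_range.1 hk))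

theorem m_succ (b n : ℕ) : m b (n + 1) = m (T b) n + if Odd b then 1 else 0 := by
  rw [m, m, card_filter, card_filter, sum_range_succ']
  rfl

theorem m_two_mul_succ (a n : ℕ) : m (2 * a) (n + 1) = m a n := by
  simp [m_succ, T_two_mul]

theorem m_two_mul_add_one_succ (a n : ℕ) : m (2 * a + 1) (n + 1) = m (3 * a + 2) n + 1 := by
  simp [m_succ, T_two_mul_add_one]

theorem sum_three_pow_m (n : ℕ) : ∑ b ∈ range (2 ^ n), 3 ^ m b n = 4 ^ n := by
  induction n with
  | zero => simp [m]
  | succ n ih =>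
    have hperm : ∑ a ∈ range (2 ^ n), 3 ^ m (3 * a + 2) n = ∑ a ∈ range (2 ^ n), 3 ^ m a n :=
      ((m_periodic n).comp (3 ^ ·)).sum_range_mul_add (Nat.Coprime.pow_right n (by norm_num)) 2
    calc ∑ b ∈ range (2 ^ (n + 1)), 3 ^ m b (n + 1)
        = ∑ a ∈ range (2 ^ n), 3 ^ m (2 * a) (n + 1)
          + ∑ a ∈ range (2 ^ n), 3 ^ m (2 * a + 1) (n + 1) := by
          rw [pow_succ', sum_range_two_mul]
      _ = ∑ a ∈ range (2 ^ n), 3 ^ m a n + 3 * ∑ a ∈ range (2 ^ n), 3 ^ m (3 * a + 2) n := by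
          rw [mul_sum]
          congr 1 <;> refine sum_congr rfl fun a _ => ?_
          · rw [m_two_mul_succ]
          · rw [m_two_mul_add_one_succ, pow_succ, mul_comm]
      _ = 4 ^ (n + 1) := by rw [hperm, ih]; ring

theorem stmt5 : ∀ n ≥ 1, ∑ b ∈ Finset.range (2 ^ n), 3 ^ m b n = 4 ^ n :=
  fun n _ => sum_three_pow_m n
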